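/- Let {𝔄_n} be a sequence of sub-σ-algebras of 𝔄 and A ∈ 𝔄. Then E(χ_A | 𝔄_n) → χ_A almost everywhere if and only if both A and A^c are uniformly covered by {𝔄_n}. -/

import Mathlib

open MeasureTheory Filter Set Topology
open scoped ENNReal symmDiff

noncomputable section

def indR {X : Type*} (A : Set X) : X → ℝ := A.indicator fun _ => (1 : ℝ)

def UnifCovers {X : Type*} [mX : MeasurableSpace X] (μ : Measure X)
    (𝔄 : ℕ → MeasurableSpace X) (A : Set X) (As : ℕ → Set X) : Prop :=
  (∀ n, MeasurableSet[𝔄 n] (As n)) ∧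
  (∀ᵐ x ∂μ, Tendsto (fun n => indR (As n) x) atTop (𝓝 (indR A x))) ∧
  Tendsto (fun n => eLpNorm (μ[indR (A \ As n) | 𝔄 n]) ⊤ μ) atTop (𝓝 0)

def UnifCovered {X : Type*} [mX : MeasurableSpace X] (μ : Measure X)
    (𝔄 : ℕ → MeasurableSpace X) (A : Set X) : Prop :=
  ∃ As, UnifCovers μ 𝔄 A As

lemma indR_nonneg {X : Type*} (A : Set X) (x : X) : 0 ≤ indR A x :=
  Set.indicator_nonneg (fun _ _ => zero_le_one) x

lemma indR_mem {X : Type*} (A : Set X) {x : X} (hx : x ∈ A) : indR A x = 1 :=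
  Set.indicator_of_mem hx _

lemma indR_not_mem {X : Type*} (A : Set X) {x : X} (hx : x ∉ A) : indR A x = 0 :=
  Set.indicator_of_notMem hx _

lemma indR_integrable {X : Type*} [mX : MeasurableSpace X] (μ : Measure X)
    [IsProbabilityMeasure μ] {A : Set X} (hA : MeasurableSet A) : Integrable (indR A) μ :=
  (integrable_const (1 : ℝ)).indicator hA

lemma indR_diff_eq {X : Type*} (A S : Set X) :
    indR (A \ S) = indR A - S.indicator (indR A) := by
  funext x
  simp only [indR, Pi.sub_apply, Set.indicator_apply, Set.mem_diff]
  by_cases hxA : x ∈ A <;> by_cases hxS : x ∈ S <;> simp [hxA, hxS]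

/-- Key identity: `E(χ_{A \ S} | m) = E(χ_A | m) - χ_S ⬝ E(χ_A | m)` a.e. -/
lemma condexp_diff_ae {X : Type*} [mX : MeasurableSpace X] (μ : Measure X)
    [IsProbabilityMeasure μ] (𝔄 : ℕ → MeasurableSpace X) (n : ℕ) (hm : 𝔄 n ≤ mX)
    {A S : Set X} (hA : MeasurableSet[mX] A) (hS : MeasurableSet[𝔄 n] S) :
    μ[indR (A \ S) | 𝔄 n] =ᵐ[μ] μ[indR A | 𝔄 n] - S.indicator (μ[indR A | 𝔄 n]) := by
  have hInt : Integrable (indR A) μ := indR_integrable μ hA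
  have hIntS : Integrable (S.indicator (indR A)) μ := hInt.indicator (hm _ hS)
  calc μ[indR (A \ S) | 𝔄 n] = μ[indR A - S.indicator (indR A) | 𝔄 n] := by rw [indR_diff_eq]
    _ =ᵐ[μ] μ[indR A | 𝔄 n] - μ[S.indicator (indR A) | 𝔄 n] := condExp_sub hInt hIntS _
    _ =ᵐ[μ] μ[indR A | 𝔄 n] - S.indicator (μ[indR A | 𝔄 n]) :=
        EventuallyEq.sub EventuallyEq.rfl (condExp_indicator hInt hS)

lemma condexp_compl_ae {X : Type*} [mX : MeasurableSpace X] (μ : Measure X)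
    [IsProbabilityMeasure μ] (𝔄 : ℕ → MeasurableSpace X) (n : ℕ) (hm : 𝔄 n ≤ mX)
    {A : Set X} (hA : MeasurableSet[mX] A) :
    μ[indR Aᶜ | 𝔄 n] =ᵐ[μ] fun x => 1 - (μ[indR A | 𝔄 n]) x := by
  have hInt : Integrable (indR A) μ := indR_integrable μ hA
  have h1 : indR Aᶜ = (fun _ => (1:ℝ)) - indR A := by
    funext x
    by_cases hxA : x ∈ A <;>
      simp [indR, Set.indicator_apply, hxA]
  calc μ[indR Aᶜ | 𝔄 n] = μ[(fun _ => (1:ℝ)) - indR A | 𝔄 n] := by rw [h1]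
    _ =ᵐ[μ] μ[fun _ => (1:ℝ) | 𝔄 n] - μ[indR A | 𝔄 n] := condExp_sub (integrable_const 1) hInt _
    _ = fun x => 1 - (μ[indR A | 𝔄 n]) x := by
        rw [condExp_const hm (1:ℝ)]; rfl

lemma exists_rate {X : Type*} [mX : MeasurableSpace X] (μ : Measure X) [IsProbabilityMeasure μ]
    (h : ℕ → X → ℝ) (hm : ∀ n, Measurable (h n))
    (hconv : ∀ᵐ x ∂μ, Tendsto (fun n => h n x) atTop (𝓝 0)) :
    ∃ c : ℕ → ℝ, (∀ n, 0 < c n) ∧ Tendsto c atTop (𝓝 0) ∧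
      ∀ᵐ x ∂μ, ∀ᶠ n in atTop, h n x ≤ c n := by
  classical
  set D : ℕ → ℕ → Set X := fun j m => {x | ∀ n, m ≤ n → h n x ≤ 1 / (j + 1)} with hD
  have hDmeas : ∀ j m, MeasurableSet (D j m) := by
    intro j m
    have : D j m = ⋂ n, {x | m ≤ n → h n x ≤ 1 / (j + 1)} := by
      ext x; simp [hD, Set.mem_iInter]
    rw [this]
    refine MeasurableSet.iInter fun n => ?_
    by_cases hn : m ≤ n
    · simp only [hn, true_implies]
      exact measurableSet_le (hm n) measurable_const
    · simp only [hn, false_implies]; simp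
  have hDmono : ∀ j, Monotone (D j) := by
    intro j m m' hmm' x hx n hn
    exact hx n (le_trans hmm' hn)
  have hstepA : ∀ j : ℕ, ∃ M : ℕ, μ ((D j M)ᶜ) < (1/2 : ℝ≥0∞) ^ j := by
    intro j
    have hanti : Antitone (fun m => (D j m)ᶜ) := fun m m' hmm' =>
      Set.compl_subset_compl.2 (hDmono j hmm')
    have hfull : μ (⋂ m, (D j m)ᶜ) = 0 := by
      have : ∀ᵐ x ∂μ, x ∈ ⋃ m, D j m := by
        filter_upwards [hconv] with x hx
        have hpos : (0:ℝ) < 1 / (j + 1) := by positivity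
        have := (hx.eventually (ge_mem_nhds hpos)).exists_forall_of_atTop
        obtain ⟨m, hm'⟩ := this
        exact Set.mem_iUnion.2 ⟨m, fun n hn => hm' n hn⟩
      rw [ae_iff] at this
      rw [show (⋂ m, (D j m)ᶜ) = {x | ¬ x ∈ ⋃ m, D j m} by ext x; simp]
      exact this
    have htend : Tendsto (fun m => μ ((D j m)ᶜ)) atTop (𝓝 0) := by
      have := tendsto_measure_iInter_atTop
        (μ := μ) (s := fun m => (D j m)ᶜ)
        (fun m => ((hDmeas j m).compl).nullMeasurableSet) hanti ⟨0, measure_ne_top _ _⟩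
      rw [hfull] at this
      exact this
    have hpos : (0:ℝ≥0∞) < (1/2) ^ j := ENNReal.pow_pos (by norm_num) j
    exact (htend.eventually (gt_mem_nhds hpos)).exists
  choose N hN using hstepA
  set M : ℕ → ℕ := fun j => (Finset.range (j + 1)).sup N with hM
  have hMmono : Monotone M := fun a b hab =>
    Finset.sup_mono (Finset.range_subset_range.2 (by omega))
  have hNM : ∀ j, N j ≤ M j := fun j =>
    Finset.le_sup (Finset.mem_range.2 (Nat.lt_succ_self j))
  have hMcover : ∀ j, μ ((D j (M j))ᶜ) ≤ (1/2 : ℝ≥0∞) ^ j := by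
    intro j
    refine le_trans (measure_mono ?_) (hN j).le
    exact Set.compl_subset_compl.2 (hDmono j (hNM j))
  have hBC : ∀ᵐ x ∂μ, ∀ᶠ j in atTop, x ∉ (D j (M j))ᶜ := by
    refine ae_eventually_notMem ?_
    refine ne_top_of_le_ne_top ?_ (ENNReal.tsum_le_tsum hMcover)
    rw [ENNReal.tsum_geometric]
    simp
  set J : ℕ → ℕ := fun n => Nat.findGreatest (fun j => M j ≤ n) n with hJ
  refine ⟨fun n => 1 / (J n + 1 : ℝ), fun n => by positivity, ?_, ?_⟩
  · have hJtend : Tendsto J atTop atTop := by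
      refine tendsto_atTop_atTop.2 fun b => ⟨max (M b) b, fun n hn => ?_⟩
      exact Nat.le_findGreatest (le_trans (le_max_right _ _) hn)
        (le_trans (le_max_left _ _) hn)
    have : Tendsto (fun n => (J n + 1 : ℝ)) atTop atTop := by
      have := tendsto_natCast_atTop_atTop (R := ℝ) |>.comp hJtend
      exact this.atTop_add tendsto_const_nhds
    simpa [one_div, Pi.inv_def] using this.inv_tendsto_atTop
  · filter_upwards [hBC] with x hx
    obtain ⟨j0, hj0⟩ := eventually_atTop.1 hx
    rw [eventually_atTop]
    refine ⟨max (M j0) j0, fun n hn => ?_⟩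
    have hMj0n : M j0 ≤ n := le_trans (le_max_left _ _) hn
    have hj0n : j0 ≤ n := le_trans (le_max_right _ _) hn
    have hJge : j0 ≤ J n := Nat.le_findGreatest hj0n hMj0n
    have hJspec : M (J n) ≤ n := Nat.findGreatest_spec (P := fun j => M j ≤ n) hj0n hMj0n
    have hxD : x ∈ D (J n) (M (J n)) := by
      have := hj0 (J n) hJge
      simpa using this
    exact hxD n hJspec

/-- Forward direction, for a single set. -/
lemma unifCovered_of_tendsto {X : Type*} [mX : MeasurableSpace X] (μ : Measure X)
    [IsProbabilityMeasure μ] (𝔄 : ℕ → MeasurableSpace X) (h𝔄 : ∀ n, 𝔄 n ≤ mX)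
    (A : Set X) (hA : MeasurableSet A)
    (hconv : ∀ᵐ x ∂μ, Tendsto (fun n => (μ[indR A | 𝔄 n]) x) atTop (𝓝 (indR A x))) :
    UnifCovered μ 𝔄 A := by
  set f : ℕ → X → ℝ := fun n => μ[indR A | 𝔄 n] with hf
  have hfmeas : ∀ n, Measurable (f n) :=
    fun n => (stronglyMeasurable_condExp.mono (h𝔄 n)).measurable
  have hfnonneg : ∀ n, 0 ≤ᵐ[μ] f n := fun n =>
    condExp_nonneg (Eventually.of_forall (indR_nonneg A))
  -- rate on Aᶜ
  have hrate : ∀ᵐ x ∂μ, Tendsto (fun n => Aᶜ.indicator (f n) x) atTop (𝓝 0) := by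
    filter_upwards [hconv] with x hx
    by_cases hxA : x ∈ A
    · have : ∀ n, Aᶜ.indicator (f n) x = 0 := fun n =>
        Set.indicator_of_notMem (s := Aᶜ) (Set.notMem_compl_iff.2 hxA) _
      simp only [this]
      exact tendsto_const_nhds
    · have : ∀ n, Aᶜ.indicator (f n) x = f n x := fun n =>
        Set.indicator_of_mem (s := Aᶜ) (Set.mem_compl hxA) _
      simp only [this]
      simpa [indR_not_mem A hxA] using hx
  obtain ⟨c, hcpos, hc0, hcae⟩ := exists_rate μ (fun n => Aᶜ.indicator (f n))
    (fun n => (hfmeas n).indicator hA.compl) hrate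
  refine ⟨fun n => {x | c n < f n x}, fun n => ?_, ?_, ?_⟩
  · exact measurableSet_lt measurable_const stronglyMeasurable_condExp.measurable
  · filter_upwards [hconv, hcae] with x hx hxc
    by_cases hxA : x ∈ A
    · rw [indR_mem A hxA]
      rw [indR_mem A hxA] at hx
      have h1 : ∀ᶠ n in atTop, c n < f n x := by
        have e1 : ∀ᶠ n in atTop, c n < 1/2 := hc0.eventually (gt_mem_nhds (by norm_num))
        have e2 : ∀ᶠ n in atTop, (1:ℝ)/2 < f n x := hx.eventually (lt_mem_nhds (by norm_num))
        filter_upwards [e1, e2] with n h1 h2 using h1.trans h2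
      refine Tendsto.congr' ?_ tendsto_const_nhds
      filter_upwards [h1] with n hn
      exact (indR_mem _ hn).symm
    · rw [indR_not_mem A hxA]
      have h1 : ∀ᶠ n in atTop, ¬ (c n < f n x) := by
        filter_upwards [hxc] with n hn
        have hn' : f n x ≤ c n := by
          rwa [Set.indicator_of_mem (Set.mem_compl hxA)] at hn
        exact not_lt.2 hn'
      refine Tendsto.congr' ?_ tendsto_const_nhds
      filter_upwards [h1] with n hn
      exact (indR_not_mem _ hn).symm
  · have hbound : ∀ n, eLpNorm (μ[indR (A \ {x | c n < f n x}) | 𝔄 n]) ⊤ μ ≤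
        ENNReal.ofReal (c n) := by
      intro n
      have hSmeas : MeasurableSet[𝔄 n] {x | c n < f n x} :=
        measurableSet_lt measurable_const stronglyMeasurable_condExp.measurable
      have hid := condexp_diff_ae μ 𝔄 n (h𝔄 n) hA hSmeas
      have hae : ∀ᵐ x ∂μ, ‖(μ[indR (A \ {x | c n < f n x}) | 𝔄 n]) x‖ ≤ c n := by
        filter_upwards [hid, hfnonneg n] with x hidx hnnx
        rw [hidx]
        simp only [Pi.sub_apply]
        by_cases hxS : x ∈ {x | c n < f n x}
        · rw [Set.indicator_of_mem hxS]
          simpa using (hcpos n).le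
        · rw [Set.indicator_of_notMem hxS, sub_zero, Real.norm_eq_abs,
            abs_of_nonneg hnnx]
          exact not_lt.1 hxS
      calc eLpNorm (μ[indR (A \ {x | c n < f n x}) | 𝔄 n]) ⊤ μ
          ≤ μ Set.univ ^ (⊤:ℝ≥0∞).toReal⁻¹ * ENNReal.ofReal (c n) :=
            eLpNorm_le_of_ae_bound hae
        _ = ENNReal.ofReal (c n) := by simp
    refine tendsto_of_tendsto_of_tendsto_of_le_of_le tendsto_const_nhds ?_
      (fun n => zero_le) hbound
    have := ENNReal.tendsto_ofReal hc0
    simpa using this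

lemma tendsto_zero_of_nnnorm_ennreal {u : ℕ → ℝ}
    (h : Tendsto (fun n => (‖u n‖₊ : ℝ≥0∞)) atTop (𝓝 0)) :
    Tendsto u atTop (𝓝 0) := by
  rw [← ENNReal.coe_zero, ENNReal.tendsto_coe] at h
  rw [tendsto_zero_iff_norm_tendsto_zero]
  have := NNReal.tendsto_coe.2 h
  simpa using this

/-- Converse direction helper: for a.e. `x ∉ B`, `E(χ_B|𝔄_n)(x) → 0`, given a uniform cover of
`B`. -/
lemma ae_tendsto_zero_of_cover {X : Type*} [mX : MeasurableSpace X] (μ : Measure X)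
    [IsProbabilityMeasure μ] (𝔄 : ℕ → MeasurableSpace X) (h𝔄 : ∀ n, 𝔄 n ≤ mX)
    (B : Set X) (hB : MeasurableSet B) (Bs : ℕ → Set X) (hcov : UnifCovers μ 𝔄 B Bs) :
    ∀ᵐ x ∂μ, x ∉ B → Tendsto (fun n => (μ[indR B | 𝔄 n]) x) atTop (𝓝 0) := by
  obtain ⟨hBsmeas, hBsconv, hBsnorm⟩ := hcov
  have hid : ∀ n, μ[indR (B \ Bs n) | 𝔄 n] =ᵐ[μ]
      μ[indR B | 𝔄 n] - (Bs n).indicator (μ[indR B | 𝔄 n]) :=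
    fun n => condexp_diff_ae μ 𝔄 n (h𝔄 n) hB (hBsmeas n)
  have hbnd : ∀ n, ∀ᵐ x ∂μ, (‖(μ[indR (B \ Bs n) | 𝔄 n]) x‖₊ : ℝ≥0∞) ≤
      eLpNorm (μ[indR (B \ Bs n) | 𝔄 n]) ⊤ μ := by
    intro n
    rw [eLpNorm_exponent_top]
    exact enorm_ae_le_eLpNormEssSup _ μ
  filter_upwards [hBsconv, ae_all_iff.2 hid, ae_all_iff.2 hbnd] with x hxconv hxid hxbnd hxB
  -- eventually x ∉ Bs n
  have hev : ∀ᶠ n in atTop, x ∉ Bs n := by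
    rw [indR_not_mem B hxB] at hxconv
    have := hxconv.eventually (gt_mem_nhds (by norm_num : (0:ℝ) < 1))
    filter_upwards [this] with n hn hmem
    rw [indR_mem _ hmem] at hn
    exact absurd hn (by norm_num)
  have hevEq : ∀ᶠ n in atTop, (‖(μ[indR B | 𝔄 n]) x‖₊ : ℝ≥0∞) =
      (‖(μ[indR (B \ Bs n) | 𝔄 n]) x‖₊ : ℝ≥0∞) := by
    filter_upwards [hev] with n hn
    rw [hxid n]
    simp [Set.indicator_of_notMem hn]
  have hsq : Tendsto (fun n => (‖(μ[indR B | 𝔄 n]) x‖₊ : ℝ≥0∞)) atTop (𝓝 0) := by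
    refine tendsto_of_tendsto_of_tendsto_of_le_of_le' tendsto_const_nhds hBsnorm
      (Eventually.of_forall fun n => zero_le) ?_
    filter_upwards [hevEq] with n hn
    rw [hn]
    exact hxbnd n
  exact tendsto_zero_of_nnnorm_ennreal hsq

theorem stmt12 {X : Type*} [mX : MeasurableSpace X] (μ : Measure X) [IsProbabilityMeasure μ]
    (𝔄 : ℕ → MeasurableSpace X) (h𝔄 : ∀ n, 𝔄 n ≤ mX)
    (A : Set X) (hA : MeasurableSet A) :
    (∀ᵐ x ∂μ, Tendsto (fun n => (μ[indR A | 𝔄 n]) x) atTop (𝓝 (indR A x))) ↔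
      (UnifCovered μ 𝔄 A ∧ UnifCovered μ 𝔄 Aᶜ) := by
  have hcompl : ∀ n, μ[indR Aᶜ | 𝔄 n] =ᵐ[μ] fun x => 1 - (μ[indR A | 𝔄 n]) x :=
    fun n => condexp_compl_ae μ 𝔄 n (h𝔄 n) hA
  constructor
  · intro hconv
    refine ⟨unifCovered_of_tendsto μ 𝔄 h𝔄 A hA hconv, unifCovered_of_tendsto μ 𝔄 h𝔄 Aᶜ
      hA.compl ?_⟩
    filter_upwards [hconv, ae_all_iff.2 hcompl] with x hx hxc
    have : Tendsto (fun n => 1 - (μ[indR A | 𝔄 n]) x) atTop (𝓝 (1 - indR A x)) :=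
      hx.const_sub 1
    have h2 : indR Aᶜ x = 1 - indR A x := by
      by_cases hxA : x ∈ A
      · rw [indR_mem A hxA, indR_not_mem Aᶜ (by simp [hxA])]; norm_num
      · rw [indR_not_mem A hxA, indR_mem Aᶜ hxA]; norm_num
    rw [h2]
    exact this.congr fun n => (hxc n).symm
  · rintro ⟨⟨As, hcovA⟩, ⟨Bs, hcovB⟩⟩
    have hA0 := ae_tendsto_zero_of_cover μ 𝔄 h𝔄 A hA As hcovA
    have hB0 := ae_tendsto_zero_of_cover μ 𝔄 h𝔄 Aᶜ hA.compl Bs hcovB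
    filter_upwards [hA0, hB0, ae_all_iff.2 hcompl] with x hxA0 hxB0 hxc
    by_cases hxA : x ∈ A
    · rw [indR_mem A hxA]
      have hg : Tendsto (fun n => (μ[indR Aᶜ | 𝔄 n]) x) atTop (𝓝 0) :=
        hxB0 (by simp [hxA])
      have : Tendsto (fun n => 1 - (μ[indR Aᶜ | 𝔄 n]) x) atTop (𝓝 (1 - 0)) :=
        hg.const_sub 1
      rw [sub_zero] at this
      refine this.congr fun n => ?_
      rw [hxc n]
      ring
    · rw [indR_not_mem A hxA]
      exact hxA0 hxA
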